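/- arXiv:1404.0792 — 3 statements merged into one kernel-verified Lean document; each statement's English description precedes it below -/
import Mathlib

section
/- Set a = (n−2)/2 and let b ≤ a. Then there exists a constant C = C_b > 0 such that for every radially symmetric function u ∈ C¹(Ω̄) with u = 0 on ∂Ω (extended by 0 to all of ℝⁿ) and ∫_Ω |x|^{−a}|∇u|² dx < ∞, one has, for almost every x ∈ Ω, |u(x)| ≤ C |x|^{−(n−b−2)/2} (∫_Ω |y|^{−a} |∇u(y)|² dy)^{1/2}. -/
/-!
Write `r = ‖x‖` and let `φ` be the profile of the radial function `u`, so that `u x = φ r` and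
`φ 1 = 0`. Then `|u x| ≤ ∫_r^1 |φ'|`, and Cauchy–Schwarz with the weight `s ^ (n - 1 - a)` bounds
this by `(∫_r^1 s ^ (n - 1 - a) φ'²) ^ (1/2) * (∫_r^1 s ^ (-(n - 1 - a))) ^ (1/2)`. In polar
coordinates, and since `|φ' ‖y‖| ≤ ‖∇u y‖`, the first factor is at most `(n |B₁|) ^ (-1/2)` times the
square root of the weighted energy; the second is `O(r ^ (-(n - 2 - a) / 2))` because `a < n - 2`.
For `a = (n - 2)/2` the exponent is `-(n - 2)/4`, which is at least `-(n - b - 2)/2` when `b ≤ a`,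
and `r < 1`.
-/

open MeasureTheory Filter

noncomputable section

/-- Euclidean space `ℝⁿ`. -/
abbrev Euc (n : ℕ) := EuclideanSpace ℝ (Fin n)

/-- `Ω`, the open unit ball of `ℝⁿ`. -/
def Omeg (n : ℕ) : Set (Euc n) := Metric.ball 0 1

/-- `l = n/2` if `n` is even, `l = ⌊n/2⌋ + 1` if `n` is odd. -/
def lval (n : ℕ) : ℕ := if Even n then n / 2 else n / 2 + 1

/-- `p*(n) = 2(n+2)/(n-2)` if `n` is even, `2(⌊n/2⌋+2)/⌊n/2⌋` if `n` is odd. -/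
def pstar (n : ℕ) : ℝ :=
  if Even n then 2 * ((n : ℝ) + 2) / ((n : ℝ) - 2)
  else 2 * (((n / 2 : ℕ) : ℝ) + 2) / ((n / 2 : ℕ) : ℝ)

/-- The primitive `F(t) = ∫₀ᵗ f(s) ds`. -/
def Fprim (f : ℝ → ℝ) (t : ℝ) : ℝ := ∫ s in (0:ℝ)..t, f s

/-- A function on `ℝⁿ` is radially symmetric if it depends only on `|x|`. -/
def Radial (n : ℕ) (u : Euc n → ℝ) : Prop := ∀ x y : Euc n, ‖x‖ = ‖y‖ → u x = u y

/-- Locally Hölder continuous. -/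
def LocHolder (f : ℝ → ℝ) : Prop :=
  ∀ x : ℝ, ∃ s ∈ nhds x, ∃ C γ : NNReal, 0 < γ ∧ γ ≤ 1 ∧ HolderOnWith C γ f s

/-- Hypothesis (f1). -/
def Hf1 (f : ℝ → ℝ) : Prop :=
  LocHolder f ∧ (∀ z > 0, 0 ≤ f z) ∧
  f =o[nhds 0] (fun z : ℝ => z) ∧
  Tendsto (fun z => f z / z) atTop atTop ∧
  ∀ z ≤ 0, f z = 0

/-- Hypothesis (f2), with explicit constants `C`, `p`. -/
def Hf2 (n : ℕ) (f : ℝ → ℝ) (C p : ℝ) : Prop :=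
  0 < C ∧ 2 < p ∧ p < pstar n ∧ ∀ z : ℝ, |f z| ≤ C * (1 + |z|) ^ (p - 1)

/-- Hypothesis (f3), with explicit exponent `q`. -/
def Hf3 (f : ℝ → ℝ) (q : ℝ) : Prop :=
  2 < q ∧ ∀ t : ℝ, q * Fprim f t ≤ t * f t

/-- Hypothesis (f4), with explicit exponents `μ₁`, `μ₂` and auxiliary function `g`. -/
def Hf4 (n : ℕ) (f g : ℝ → ℝ) (μ₁ μ₂ : ℝ) : Prop :=
  2 < μ₁ ∧ 2 < μ₂ ∧
  (∀ t ∈ Set.Icc (0:ℝ) 1, ∀ v ≥ (0:ℝ), t ^ (μ₁ - 1) * f v ≤ f (t * v)) ∧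
  (∀ t ≥ (1:ℝ), ∀ v ≥ (0:ℝ), t ^ (μ₂ - 1) * g v ≤ f (t * v)) ∧
  Continuous g ∧ (∀ z, 0 ≤ g z) ∧ g 0 = 0 ∧
  4 * (μ₁ - μ₂) / ((μ₁ - 2) * (μ₂ - 2)) < (n : ℝ) - (lval n : ℝ)

/-- The energy functional `I_α`. -/
def Ien (n : ℕ) (f : ℝ → ℝ) (α : ℝ) (u : Euc n → ℝ) : ℝ :=
  (1/2) * (∫ x in Omeg n, ‖gradient u x‖ ^ 2) - ∫ x in Omeg n, ‖x‖ ^ α * Fprim f (u x)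

/-- A radial Nehari function for exponent `α`. -/
def RadNehari (n : ℕ) (f : ℝ → ℝ) (α : ℝ) (u : Euc n → ℝ) : Prop :=
  Radial n u ∧ ContDiffOn ℝ 1 u (closure (Omeg n)) ∧
  (∀ x : Euc n, ‖x‖ = 1 → u x = 0) ∧ (∃ x, u x ≠ 0) ∧
  (∫ x in Omeg n, ‖gradient u x‖ ^ 2) = ∫ x in Omeg n, ‖x‖ ^ α * (f (u x) * u x)

/-- `m_{α,r}`, the infimum of `I_α` over radial Nehari functions. -/
def mrad (n : ℕ) (f : ℝ → ℝ) (α : ℝ) : ℝ :=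
  sInf (Ien n f α '' {u | RadNehari n f α u})

/-- The Laplacian, as the sum of pure second derivatives. -/
def lapl (n : ℕ) (u : Euc n → ℝ) (x : Euc n) : ℝ :=
  ∑ i : Fin n, iteratedFDeriv ℝ 2 u x ![EuclideanSpace.single i 1, EuclideanSpace.single i 1]

/-- Biradial symmetry: `u(y,z)` depends only on `(|y|,|z|)`,
`(y,z) ∈ ℝ^l × ℝ^{n-l}`. -/
def BiRadial (n : ℕ) (u : Euc n → ℝ) : Prop :=
  ∀ x y : Euc n,
    (∑ i : Fin n, if (i : ℕ) < lval n then (x i) ^ 2 else 0) =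
      (∑ i : Fin n, if (i : ℕ) < lval n then (y i) ^ 2 else 0) →
    (∑ i : Fin n, if (i : ℕ) < lval n then 0 else (x i) ^ 2) =
      (∑ i : Fin n, if (i : ℕ) < lval n then 0 else (y i) ^ 2) →
    u x = u y

/-- A biradial Nehari function for exponent `α`. -/
def BiNehari (n : ℕ) (f : ℝ → ℝ) (α : ℝ) (u : Euc n → ℝ) : Prop :=
  BiRadial n u ∧ ContDiffOn ℝ 1 u (closure (Omeg n)) ∧
  (∀ x : Euc n, ‖x‖ = 1 → u x = 0) ∧ (∃ x, u x ≠ 0) ∧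
  (∫ x in Omeg n, ‖gradient u x‖ ^ 2) = ∫ x in Omeg n, ‖x‖ ^ α * (f (u x) * u x)

/-- `m_α^l`, the infimum of `I_α` over biradial Nehari functions. -/
def mbl (n : ℕ) (f : ℝ → ℝ) (α : ℝ) : ℝ :=
  sInf (Ien n f α '' {u | BiNehari n f α u})

/-- The functional `J_γ(v) = ½∫_Ω |x|^{-γ}|∇v|² - ∫_Ω F(v)` (weight exponent `γ`). -/
def Jw (n : ℕ) (f : ℝ → ℝ) (γ : ℝ) (v : Euc n → ℝ) : ℝ :=
  (1/2) * (∫ x in Omeg n, ‖x‖ ^ (-γ) * ‖gradient v x‖ ^ 2) - ∫ x in Omeg n, Fprim f (v x)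

/-- The Nehari-type set `M_γ` for the weight exponent `γ`. -/
def Mw (n : ℕ) (f : ℝ → ℝ) (γ : ℝ) : Set (Euc n → ℝ) :=
  {v | Radial n v ∧ ContDiffOn ℝ 1 v (closure (Omeg n)) ∧
    (∀ x : Euc n, ‖x‖ = 1 → v x = 0) ∧ (∃ x, v x ≠ 0) ∧
    (∫ x in Omeg n, ‖x‖ ^ (-γ) * ‖gradient v x‖ ^ 2) = ∫ x in Omeg n, f (v x) * v x}

open Set Metric Module

lemma memLp_restrict_Ioc_of_continuousOn {f : ℝ → ℝ} {r R : ℝ} (hf : ContinuousOn f (Icc r R))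
    (p : ENNReal) : MemLp f p (volume.restrict (Ioc r R)) := by
  obtain ⟨C, hC⟩ := isCompact_Icc.exists_bound_of_continuousOn hf
  have : IsFiniteMeasure (volume.restrict (Ioc r R)) :=
    isFiniteMeasure_restrict.2 measure_Ioc_lt_top.ne
  exact MemLp.of_bound ((hf.mono Ioc_subset_Icc_self).aestronglyMeasurable measurableSet_Ioc) C
    (ae_restrict_of_forall_mem measurableSet_Ioc fun s hs => hC s (Ioc_subset_Icc_self hs))

lemma intervalIntegral_mul_le_sqrt_mul_sqrt {f g : ℝ → ℝ} {r R : ℝ} (hrR : r ≤ R)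
    (hf : ContinuousOn f (Icc r R)) (hg : ContinuousOn g (Icc r R)) :
    ∫ s in r..R, f s * g s ≤ √(∫ s in r..R, f s ^ 2) * √(∫ s in r..R, g s ^ 2) := by
  simp only [intervalIntegral.integral_of_le hrR, Real.sqrt_eq_rpow]
  have holder := integral_mul_le_Lp_mul_Lq_of_nonneg Real.HolderConjugate.two_two
    (ae_of_all _ fun s => abs_nonneg (f s)) (ae_of_all _ fun s => abs_nonneg (g s))
    (by simpa using memLp_restrict_Ioc_of_continuousOn hf.abs 2)
    (by simpa using memLp_restrict_Ioc_of_continuousOn hg.abs 2)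
  simp only [Real.rpow_two, sq_abs, ← abs_mul] at holder
  exact (le_abs_self _).trans ((abs_integral_le_integral_abs).trans holder)

lemma abs_sub_le_sqrt_mul_sqrt_of_hasDerivAt {φ φ' w : ℝ → ℝ} {r R : ℝ} (hrR : r ≤ R)
    (hφ : ContinuousOn φ (Icc r R)) (hderiv : ∀ s ∈ Ioo r R, HasDerivAt φ (φ' s) s)
    (hφ' : ContinuousOn φ' (Icc r R)) (hw : ContinuousOn w (Icc r R))
    (hw0 : ∀ s ∈ Icc r R, 0 < w s) :
    |φ R - φ r| ≤ √(∫ s in r..R, w s * φ' s ^ 2) * √(∫ s in r..R, (w s)⁻¹) := by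
  have hsqrt : ContinuousOn (fun s => √(w s)) (Icc r R) := hw.sqrt
  have hsqrt0 : ∀ s ∈ Icc r R, √(w s) ≠ 0 := fun s hs => (Real.sqrt_pos.2 (hw0 s hs)).ne'
  have huIcc : uIcc r R = Icc r R := uIcc_of_le hrR
  calc |φ R - φ r| = |∫ s in r..R, φ' s| := by
        rw [intervalIntegral.integral_eq_sub_of_hasDerivAt_of_le hrR hφ hderiv
          (hφ'.intervalIntegrable_of_Icc hrR)]
    _ ≤ ∫ s in r..R, |φ' s| := intervalIntegral.abs_integral_le_integral_abs hrR
    _ = ∫ s in r..R, (√(w s) * |φ' s|) * (√(w s))⁻¹ := by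
        refine intervalIntegral.integral_congr fun s hs => ?_
        rw [huIcc] at hs
        field_simp [hsqrt0 s hs]
    _ ≤ √(∫ s in r..R, (√(w s) * |φ' s|) ^ 2) * √(∫ s in r..R, ((√(w s))⁻¹) ^ 2) :=
        intervalIntegral_mul_le_sqrt_mul_sqrt hrR (hsqrt.mul hφ'.abs) (hsqrt.inv₀ hsqrt0)
    _ = √(∫ s in r..R, w s * φ' s ^ 2) * √(∫ s in r..R, (w s)⁻¹) := by
        congr 2 <;> refine intervalIntegral.integral_congr fun s hs => ?_ <;> rw [huIcc] at hs <;>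
          simp only [mul_pow, inv_pow, sq_abs, Real.sq_sqrt (hw0 s hs).le]

lemma intervalIntegral_inv_rpow_le {p r R : ℝ} (hp : 1 < p) (hr : 0 < r) (hrR : r ≤ R) :
    ∫ s in r..R, (s ^ p)⁻¹ ≤ r ^ (1 - p) / (p - 1) := by
  have h0 : (0 : ℝ) ∉ uIcc r R := by rw [uIcc_of_le hrR]; exact fun h => hr.not_ge h.1
  rw [intervalIntegral.integral_congr fun s hs => (Real.rpow_neg
      (hr.le.trans (uIcc_of_le hrR ▸ hs).1) p).symm,
    integral_rpow (Or.inr ⟨by linarith, h0⟩), show -p + 1 = 1 - p by ring,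
    show 1 - p = -(p - 1) by ring, div_neg, ← neg_div, neg_sub]
  gcongr
  exact sub_le_self _ (Real.rpow_nonneg (hr.le.trans hrR) _)

lemma ContDiffOn.hasDerivAt_derivWithin_Icc {f : ℝ → ℝ} {r R : ℝ}
    (hf : ContDiffOn ℝ 1 f (Icc r R)) {s : ℝ} (hs : s ∈ Ioo r R) :
    HasDerivAt f (derivWithin f (Icc r R) s) s :=
  (hf.differentiableOn one_ne_zero s (Ioo_subset_Icc_self hs)).hasDerivWithinAt.hasDerivAt
    (Icc_mem_nhds hs.1 hs.2)

lemma measureReal_ball_pos {X : Type*} [PseudoMetricSpace X] [ProperSpace X] [MeasurableSpace X]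
    (μ : Measure X) [μ.IsOpenPosMeasure] [IsFiniteMeasureOnCompacts μ] (x : X) {r : ℝ}
    (hr : 0 < r) : 0 < μ.real (ball x r) :=
  ENNReal.toReal_pos (measure_ball_pos μ x hr).ne' measure_ball_lt_top.ne

section Polar

variable {E : Type*} [NormedAddCommGroup E] [NormedSpace ℝ E] [FiniteDimensional ℝ E]
  [Nontrivial E] [MeasurableSpace E] [BorelSpace E] (μ : Measure E) [μ.IsAddHaarMeasure]

lemma setIntegral_fun_norm_Ioo (f : ℝ → ℝ) {r R : ℝ} (hr : 0 ≤ r) (hrR : r ≤ R) :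
    ∫ x in norm ⁻¹' Ioo r R, f ‖x‖ ∂μ =
      finrank ℝ E * μ.real (ball 0 1) * ∫ s in r..R, s ^ (finrank ℝ E - 1) * f s := by
  have hmeas : MeasurableSet (norm ⁻¹' Ioo r R : Set E) :=
    measurableSet_Ioo.preimage measurable_norm
  have hsub : Ioo r R ⊆ Ioi 0 := fun s hs => hr.trans_lt hs.1
  rw [← integral_indicator hmeas]
  change ∫ x, (Ioo r R).indicator f ‖x‖ ∂μ = _
  rw [integral_fun_norm_addHaar μ, nsmul_eq_mul, smul_eq_mul, mul_assoc]
  congr 2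
  simp only [smul_eq_mul,
    ← indicator_mul_right (Ioo r R) (fun s => s ^ (finrank ℝ E - 1)) f]
  rw [setIntegral_indicator measurableSet_Ioo, inter_eq_self_of_subset_right hsub,
    intervalIntegral.integral_of_le hrR, integral_Ioc_eq_integral_Ioo]

lemma mul_intervalIntegral_le_setIntegral_ball {g : ℝ → ℝ} {F : E → ℝ} {r R : ℝ}
    (hr : 0 ≤ r) (hrR : r ≤ R) (hg : ∀ s ∈ Ioo r R, 0 ≤ g s)
    (hF : IntegrableOn F (ball 0 R) μ) (hF0 : ∀ y ∈ ball (0 : E) R, 0 ≤ F y)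
    (hgF : ∀ y : E, ‖y‖ ∈ Ioo r R → g ‖y‖ ≤ F y) :
    finrank ℝ E * μ.real (ball 0 1) * ∫ s in r..R, s ^ (finrank ℝ E - 1) * g s ≤
      ∫ y in ball 0 R, F y ∂μ := by
  have hsub : norm ⁻¹' Ioo r R ⊆ ball (0 : E) R := fun y hy => mem_ball_zero_iff.2 hy.2
  have hmeas : MeasurableSet (norm ⁻¹' Ioo r R : Set E) :=
    measurableSet_Ioo.preimage measurable_norm
  rw [← setIntegral_fun_norm_Ioo μ g hr hrR]
  calc ∫ y in norm ⁻¹' Ioo r R, g ‖y‖ ∂μ ≤ ∫ y in norm ⁻¹' Ioo r R, F y ∂μ :=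
        integral_mono_of_nonneg (ae_restrict_of_forall_mem hmeas fun y hy => hg _ hy)
          (hF.mono_set hsub) (ae_restrict_of_forall_mem hmeas hgF)
    _ ≤ ∫ y in ball 0 R, F y ∂μ :=
        setIntegral_mono_set hF (ae_restrict_of_forall_mem measurableSet_ball hF0)
          hsub.eventuallyLE

end Polar

section Radial

variable {E : Type*} [NormedAddCommGroup E] [InnerProductSpace ℝ E]

lemma contDiffOn_Icc_comp_smul {u : E → ℝ} (hu : ContDiffOn ℝ 1 u (closedBall 0 1)) {e : E}
    (he : ‖e‖ = 1) : ContDiffOn ℝ 1 (fun t : ℝ => u (t • e)) (Icc 0 1) :=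
  hu.comp (contDiff_id.smul contDiff_const).contDiffOn fun t ht => by
    simp [norm_smul, he, abs_of_nonneg ht.1, ht.2]

lemma abs_le_norm_gradient_of_hasDerivAt_radial [CompleteSpace E] {u : E → ℝ}
    (hrad : ∀ x y : E, ‖x‖ = ‖y‖ → u x = u y) {e y : E} (he : ‖e‖ = 1) (hy : y ≠ 0)
    (hu : DifferentiableAt ℝ u y) {c : ℝ} (hc : HasDerivAt (fun t : ℝ => u (t • e)) c ‖y‖) :
    |c| ≤ ‖gradient u y‖ := by
  set v := ‖y‖⁻¹ • y
  have hy0 : 0 < ‖y‖ := norm_pos_iff.2 hy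
  have hv : ‖v‖ = 1 := by rw [norm_smul, norm_inv, norm_norm, inv_mul_cancel₀ hy0.ne']
  have hyv : ‖y‖ • v = y := by rw [smul_smul, mul_inv_cancel₀ hy0.ne', one_smul]
  have hline : HasDerivAt (fun t : ℝ => u (t • v)) (fderiv ℝ u y v) ‖y‖ := by
    have hray : HasDerivAt (fun t : ℝ => t • v) v ‖y‖ := by
      simpa using (hasDerivAt_id ‖y‖).smul_const v
    have hu' : HasFDerivAt u (fderiv ℝ u y) (‖y‖ • v) := by rw [hyv]; exact hu.hasFDerivAt
    exact hu'.comp_hasDerivAt ‖y‖ hray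
  have heq : (fun t : ℝ => u (t • e)) =ᶠ[nhds ‖y‖] fun t => u (t • v) := by
    filter_upwards [eventually_gt_nhds hy0] with t ht
    exact hrad _ _ (by rw [norm_smul, norm_smul, he, hv])
  rw [hc.unique (hline.congr_of_eventuallyEq heq), ← Real.norm_eq_abs]
  calc ‖fderiv ℝ u y v‖ ≤ ‖fderiv ℝ u y‖ * ‖v‖ := (fderiv ℝ u y).le_opNorm v
    _ = ‖gradient u y‖ := by rw [hv, mul_one, gradient, LinearIsometryEquiv.norm_map]

end Radial

section Pointwise

variable {E : Type*} [NormedAddCommGroup E] [InnerProductSpace ℝ E] [FiniteDimensional ℝ E]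
  [MeasurableSpace E] [BorelSpace E] (μ : Measure E) [μ.IsAddHaarMeasure]

lemma mul_intervalIntegral_rpow_mul_sq_derivWithin_le {a : ℝ} {u : E → ℝ}
    (hrad : ∀ x y : E, ‖x‖ = ‖y‖ → u x = u y) (hu : ContDiffOn ℝ 1 u (closedBall 0 1))
    (hE : IntegrableOn (fun y => ‖y‖ ^ (-a) * ‖gradient u y‖ ^ 2) (ball 0 1) μ)
    {e : E} (he : ‖e‖ = 1) {r : ℝ} (hr : 0 < r) (hr1 : r ≤ 1) :
    finrank ℝ E * μ.real (ball 0 1) * ∫ s in r..1,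
        s ^ ((finrank ℝ E : ℝ) - 1 - a) * derivWithin (fun t => u (t • e)) (Icc 0 1) s ^ 2 ≤
      ∫ y in ball 0 1, ‖y‖ ^ (-a) * ‖gradient u y‖ ^ 2 ∂μ := by
  have : Nontrivial E := ⟨⟨e, 0, ne_zero_of_norm_ne_zero (he.trans_ne one_ne_zero)⟩⟩
  set φ' := derivWithin (fun t : ℝ => u (t • e)) (Icc 0 1)
  have hgrad : ∀ y : E, ‖y‖ ∈ Ioo r 1 → φ' ‖y‖ ^ 2 ≤ ‖gradient u y‖ ^ 2 := fun y hy => by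
    have hy' : ‖y‖ ∈ Ioo 0 1 := ⟨hr.trans hy.1, hy.2⟩
    have hdiff : DifferentiableAt ℝ u y :=
      (hu.contDiffAt (closedBall_mem_nhds_of_mem (mem_ball_zero_iff.2 hy.2))).differentiableAt
        one_ne_zero
    refine sq_le_sq.2 ((abs_le_norm_gradient_of_hasDerivAt_radial hrad he (norm_pos_iff.1 hy'.1)
      hdiff ((contDiffOn_Icc_comp_smul hu he).hasDerivAt_derivWithin_Icc hy')).trans
      (le_abs_self _))
  have := mul_intervalIntegral_le_setIntegral_ball μ (g := fun s => s ^ (-a) * φ' s ^ 2)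
    hr.le hr1 (fun s hs => mul_nonneg (Real.rpow_nonneg (hr.trans hs.1).le _) (sq_nonneg _))
    hE (fun y _ => by positivity)
    fun y hy => mul_le_mul_of_nonneg_left (hgrad y hy) (by positivity)
  convert this using 2
  refine intervalIntegral.integral_congr fun s hs => ?_
  rw [uIcc_of_le hr1] at hs
  rw [← mul_assoc, ← Real.rpow_natCast s (finrank ℝ E - 1), ← Real.rpow_add (hr.trans_le hs.1),
    Nat.cast_pred finrank_pos, sub_eq_add_neg _ a]

theorem abs_le_of_radial_of_weighted_energy {a : ℝ} (ha : a < finrank ℝ E - 2) {u : E → ℝ}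
    (hrad : ∀ x y : E, ‖x‖ = ‖y‖ → u x = u y) (hu : ContDiffOn ℝ 1 u (closedBall 0 1))
    (hu1 : ∀ x : E, ‖x‖ = 1 → u x = 0)
    (hE : IntegrableOn (fun y => ‖y‖ ^ (-a) * ‖gradient u y‖ ^ 2) (ball 0 1) μ)
    {x : E} (hx0 : x ≠ 0) (hx1 : ‖x‖ < 1) :
    |u x| ≤ √((finrank ℝ E * μ.real (ball 0 1) * (finrank ℝ E - 2 - a))⁻¹) *
      ‖x‖ ^ (-(finrank ℝ E - 2 - a) / 2) *
      √(∫ y in ball 0 1, ‖y‖ ^ (-a) * ‖gradient u y‖ ^ 2 ∂μ) := by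
  have : Nontrivial E := ⟨⟨x, 0, hx0⟩⟩
  set c := finrank ℝ E * μ.real (ball (0 : E) 1)
  set q := (finrank ℝ E : ℝ) - 2 - a
  set energy := ∫ y in ball 0 1, ‖y‖ ^ (-a) * ‖gradient u y‖ ^ 2 ∂μ
  set r := ‖x‖
  have hr : 0 < r := norm_pos_iff.2 hx0
  have hq : 0 < q := by linarith
  have hc : 0 < c := mul_pos (Nat.cast_pos.2 finrank_pos) (measureReal_ball_pos μ 0 one_pos)
  set e := r⁻¹ • x
  have he : ‖e‖ = 1 := by rw [norm_smul, norm_inv, norm_norm, inv_mul_cancel₀ hr.ne']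
  set φ := fun t : ℝ => u (t • e)
  have hφ : ContDiffOn ℝ 1 φ (Icc 0 1) := contDiffOn_Icc_comp_smul hu he
  have hsub : Icc r 1 ⊆ Icc 0 1 := Icc_subset_Icc_left hr.le
  have hA := mul_intervalIntegral_rpow_mul_sq_derivWithin_le μ hrad hu hE he hr hx1.le
  rw [show (finrank ℝ E : ℝ) - 1 - a = q + 1 by ring] at hA
  have hB := intervalIntegral_inv_rpow_le (p := q + 1) (by linarith) hr hx1.le
  rw [show 1 - (q + 1) = -q by ring, add_sub_cancel_right] at hB
  have hFTC := abs_sub_le_sqrt_mul_sqrt_of_hasDerivAt (w := fun s => s ^ (q + 1)) hx1.le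
    (hφ.continuousOn.mono hsub)
    (fun s hs => hφ.hasDerivAt_derivWithin_Icc ⟨hr.trans hs.1, hs.2⟩)
    ((hφ.continuousOn_derivWithin (uniqueDiffOn_Icc zero_lt_one) le_rfl).mono hsub)
    (continuousOn_id.rpow_const fun s _ => Or.inr (by linarith))
    (fun s hs => Real.rpow_pos_of_pos (hr.trans_le hs.1) _)
  have hux : u x = φ r := congrArg u (by simp [e, r, smul_smul, mul_inv_cancel₀ hr.ne'])
  have hφ1 : φ 1 = 0 := hu1 _ (by simp [he])
  calc |u x| = |φ 1 - φ r| := by rw [hφ1, hux, zero_sub, abs_neg]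
    _ ≤ √(energy / c) * √(r ^ (-q) / q) := by
        exact hFTC.trans (by gcongr; exact (le_div_iff₀' hc).2 hA)
    _ = √((c * q)⁻¹) * r ^ (-q / 2) * √energy := by
        have hR : 0 ≤ r ^ (-q) := Real.rpow_nonneg hr.le _
        have hr2 : r ^ (-q / 2) = √(r ^ (-q)) := by
          rw [Real.sqrt_eq_rpow, ← Real.rpow_mul hr.le]; ring_nf
        rw [hr2, ← Real.sqrt_mul' _ (div_nonneg hR hq.le), ← Real.sqrt_mul (by positivity),
          ← Real.sqrt_mul (by positivity)]
        congr 1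
        ring_nf

end Pointwise

/-- pointwise (a.e.) radial estimate with weight `|x|^{-b}`, `b ≤ a = (n-2)/2`. -/
theorem statement4 (n : ℕ) (hn : 4 ≤ n) (b : ℝ) (hb : b ≤ ((n : ℝ) - 2) / 2) :
    ∃ C > (0:ℝ), ∀ u : Euc n → ℝ, Radial n u →
      ContDiffOn ℝ 1 u (closure (Omeg n)) →
      (∀ x : Euc n, ‖x‖ = 1 → u x = 0) →
      IntegrableOn (fun x => ‖x‖ ^ (-(((n : ℝ) - 2) / 2)) * ‖gradient u x‖ ^ 2) (Omeg n) →
      ∀ᵐ x ∂(volume.restrict (Omeg n)),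
        |u x| ≤ C * ‖x‖ ^ (-(((n : ℝ) - b - 2) / 2)) *
          (∫ y in Omeg n, ‖y‖ ^ (-(((n : ℝ) - 2) / 2)) * ‖gradient u y‖ ^ 2) ^ ((1:ℝ)/2) := by
  have hn2 : (2 : ℝ) < n := by norm_cast; omega
  have ha : ((n : ℝ) - 2) / 2 < finrank ℝ (Euc n) - 2 := by
    rw [finrank_euclideanSpace_fin]; linarith
  have : Nontrivial (Euc n) :=
    nontrivial_of_finrank_pos (R := ℝ) (by rw [finrank_euclideanSpace_fin]; omega)
  have hball := measureReal_ball_pos (volume : Measure (Euc n)) 0 one_pos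
  refine ⟨√((n * volume.real (ball (0 : Euc n) 1) * (n - 2 - (n - 2) / 2))⁻¹), by
    have : (0 : ℝ) < n - 2 - (n - 2) / 2 := by linarith
    positivity, fun u hrad hu hu1 hE => ?_⟩
  unfold Omeg at *
  rw [closure_ball _ one_ne_zero] at hu
  filter_upwards [ae_restrict_mem measurableSet_ball, ae_restrict_of_ae (Measure.ae_ne volume 0)]
    with x hx hx0
  have hux := abs_le_of_radial_of_weighted_energy volume ha hrad hu hu1 hE hx0
    (mem_ball_zero_iff.1 hx)
  rw [finrank_euclideanSpace_fin] at hux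
  rw [← Real.sqrt_eq_rpow]
  refine hux.trans (mul_le_mul_of_nonneg_right (mul_le_mul_of_nonneg_left ?_ (Real.sqrt_nonneg _))
    (Real.sqrt_nonneg _))
  exact Real.rpow_le_rpow_of_exponent_ge (norm_pos_iff.2 hx0) (mem_ball_zero_iff.1 hx).le
    (by linarith)

end
end

section
/- Set a = (n−2)/2 and let q satisfy 2 < q < 4n/(n−2). Then there exists a constant C > 0 (depending only on n and q) such that for every radially symmetric function u ∈ C¹(Ω̄) with u = 0 on ∂Ω and ∫_Ω |x|^{−a}|∇u|² dx < ∞, one has (∫_Ω |u|^q dx)^{1/q} ≤ C (∫_Ω |x|^{−a} |∇u|² dx)^{1/2}. -/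
open MeasureTheory Filter

noncomputable section

/-!
Write a radial `u` as `u x = w ‖x‖`, with `w 1 = 0`. Then `w r = -∫_r^1 w'`, and Cauchy–Schwarz
with the weights `t^(∓n/2)` gives the pointwise decay
`w(r)² ≤ r^(-a) / a · ∫_0^1 t^(n/2) w'(t)² dt`, `a = (n-2)/2`.
In polar coordinates the weighted energy is `|S^{n-1}| ∫_0^1 t^(n-1) t^(-a) |∇u|² dt`, and
`n - 1 - a = n/2`, so the last integral is controlled by the energy. Raising the decay bound to the
power `q/2` and integrating against `t^(n-1)` leaves `∫_0^1 t^(n-1-aq/2) dt`, which is finite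
exactly when `q < 4n/(n-2)`.
-/

open Set Metric Topology

theorem sq_integral_mul_le_integral_sq_mul_integral_sq {α : Type*} [MeasurableSpace α]
    {μ : Measure α} {f g : α → ℝ} (hf : Integrable (fun x => f x ^ 2) μ)
    (hg : Integrable (fun x => g x ^ 2) μ) (hfg : Integrable (fun x => f x * g x) μ) :
    (∫ x, f x * g x ∂μ) ^ 2 ≤ (∫ x, f x ^ 2 ∂μ) * ∫ x, g x ^ 2 ∂μ := by
  have hquad : ∀ y : ℝ, 0 ≤ (∫ x, f x ^ 2 ∂μ) * (y * y) + 2 * (∫ x, f x * g x ∂μ) * y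
      + ∫ x, g x ^ 2 ∂μ := by
    intro y
    calc 0 ≤ ∫ x, (y * f x + g x) ^ 2 ∂μ := integral_nonneg fun x => sq_nonneg _
      _ = ∫ x, ((y * y) * f x ^ 2 + (2 * y) * (f x * g x) + g x ^ 2) ∂μ := by
          congr 1; ext x; ring
      _ = _ := by
          rw [integral_add (by exact (hf.const_mul _).add (hfg.const_mul _)) hg,
            integral_add (by exact hf.const_mul _) (by exact hfg.const_mul _), integral_const_mul,
            integral_const_mul]
          ring
  have := discrim_le_zero hquad
  rw [discrim] at this
  nlinarith

theorem integral_rpow_neg_le {r s : ℝ} (hr : 0 < r) (hr1 : r ≤ 1) (hs : 1 < s) :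
    ∫ t in r..1, t ^ (-s) ≤ r ^ (1 - s) / (s - 1) := by
  have h0 : (0:ℝ) ∉ uIcc r 1 := by
    rw [uIcc_of_le hr1]; exact fun h => (not_le.mpr hr) h.1
  rw [integral_rpow (Or.inr ⟨by linarith, h0⟩), Real.one_rpow,
    show -s + 1 = 1 - s by ring, show 1 - s = -(s - 1) by ring, div_neg, ← neg_div, neg_sub]
  gcongr
  linarith

theorem sq_le_integral_rpow_neg_mul_integral_rpow_mul_sq {w w' : ℝ → ℝ} {r s : ℝ}
    (hr : 0 < r) (hr1 : r ≤ 1) (hw : ContinuousOn w (Icc r 1)) (hw' : ContinuousOn w' (Icc r 1))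
    (hderiv : ∀ t ∈ Ioo r 1, HasDerivAt w (w' t) t) (hw1 : w 1 = 0) :
    w r ^ 2 ≤ (∫ t in r..1, t ^ (-s)) * ∫ t in r..1, t ^ s * w' t ^ 2 := by
  have hpos : ∀ t ∈ Icc r 1, 0 < t := fun t ht => hr.trans_le ht.1
  have hrpow : ∀ x : ℝ, ContinuousOn (fun t : ℝ => t ^ x) (Icc r 1) := fun x =>
    continuousOn_id.rpow_const fun t ht => Or.inl (hpos t ht).ne'
  have hint : ∀ F : ℝ → ℝ, ContinuousOn F (Icc r 1) → Integrable F (volume.restrict (Ioc r 1)) :=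
    fun F hF => (hF.integrableOn_Icc).mono_set Ioc_subset_Icc_self
  have hFTC : w r = -∫ t in r..1, w' t := by
    rw [intervalIntegral.integral_eq_sub_of_hasDerivAt_of_le hr1 hw hderiv
      (hw'.intervalIntegrable_of_Icc hr1), hw1]
    ring
  have hf : ∀ t ∈ Ioc r 1, (t ^ (-s / 2)) ^ 2 = t ^ (-s) := fun t ht => by
    rw [← Real.rpow_natCast, ← Real.rpow_mul (hpos t (Ioc_subset_Icc_self ht)).le]; norm_num
  have hg : ∀ t ∈ Ioc r 1, (t ^ (s / 2) * w' t) ^ 2 = t ^ s * w' t ^ 2 := fun t ht => by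
    rw [mul_pow, ← Real.rpow_natCast, ← Real.rpow_mul (hpos t (Ioc_subset_Icc_self ht)).le]
    norm_num
  have hfg : ∀ t ∈ Ioc r 1, t ^ (-s / 2) * (t ^ (s / 2) * w' t) = w' t := fun t ht => by
    rw [← mul_assoc, ← Real.rpow_add (hpos t (Ioc_subset_Icc_self ht)), neg_div,
      neg_add_cancel, Real.rpow_zero, one_mul]
  have hCS := sq_integral_mul_le_integral_sq_mul_integral_sq (μ := volume.restrict (Ioc r 1))
    (f := fun t => t ^ (-s / 2)) (g := fun t => t ^ (s / 2) * w' t)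
    (hint _ ((hrpow _).pow 2)) (hint _ (((hrpow _).mul hw').pow 2))
    (hint _ ((hrpow _).mul ((hrpow _).mul hw')))
  rw [setIntegral_congr_fun measurableSet_Ioc hf, setIntegral_congr_fun measurableSet_Ioc hg,
    setIntegral_congr_fun measurableSet_Ioc hfg] at hCS
  simp only [intervalIntegral.integral_of_le hr1, hFTC, neg_sq]
  exact hCS

section Profile

variable {w w' : ℝ → ℝ} {s : ℝ}

theorem sq_le_rpow_mul_integral_rpow_mul_sq (hs : 1 < s) (hw : ContinuousOn w (Icc 0 1))
    (hw' : ContinuousOn w' (Icc 0 1)) (hderiv : ∀ t ∈ Ioo 0 1, HasDerivAt w (w' t) t)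
    (hw1 : w 1 = 0) {r : ℝ} (hr : 0 < r) (hr1 : r ≤ 1) :
    w r ^ 2 ≤ r ^ (1 - s) / (s - 1) * ∫ t in 0..1, t ^ s * w' t ^ 2 := by
  have hsub : Icc r 1 ⊆ Icc 0 1 := Icc_subset_Icc_left hr.le
  have hweight : ContinuousOn (fun t : ℝ => t ^ s * w' t ^ 2) (Icc 0 1) :=
    (continuousOn_id.rpow_const fun _ _ => Or.inr (by linarith)).mul (hw'.pow 2)
  calc w r ^ 2 ≤ (∫ t in r..1, t ^ (-s)) * ∫ t in r..1, t ^ s * w' t ^ 2 :=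
        sq_le_integral_rpow_neg_mul_integral_rpow_mul_sq hr hr1 (hw.mono hsub) (hw'.mono hsub)
          (fun t ht => hderiv t ⟨hr.trans ht.1, ht.2⟩) hw1
    _ ≤ r ^ (1 - s) / (s - 1) * ∫ t in 0..1, t ^ s * w' t ^ 2 := by
        gcongr
        · exact intervalIntegral.integral_nonneg hr1 fun t ht =>
            mul_nonneg (Real.rpow_nonneg (hr.le.trans ht.1) _) (sq_nonneg _)
        · exact integral_rpow_neg_le hr hr1 hs
        · refine intervalIntegral.integral_mono_interval hr.le hr1 le_rfl ?_
            (hweight.intervalIntegrable_of_Icc zero_le_one)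
          filter_upwards [ae_restrict_mem measurableSet_Ioc] with t ht
          exact mul_nonneg (Real.rpow_nonneg ht.1.le _) (sq_nonneg _)

theorem integral_rpow_mul_abs_rpow_le {p q : ℝ} (hs : 1 < s) (hq : 0 < q)
    (hpqs : (s - 1) * q / 2 < p + 1) (hw : ContinuousOn w (Icc 0 1))
    (hw' : ContinuousOn w' (Icc 0 1)) (hderiv : ∀ t ∈ Ioo 0 1, HasDerivAt w (w' t) t)
    (hw1 : w 1 = 0) :
    ∫ t in 0..1, t ^ p * |w t| ^ q ≤
      ((∫ t in 0..1, t ^ s * w' t ^ 2) / (s - 1)) ^ (q / 2) / (p + 1 - (s - 1) * q / 2) := by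
  set K := ∫ t in 0..1, t ^ s * w' t ^ 2
  set γ := p - (s - 1) * q / 2
  have hK : 0 ≤ K / (s - 1) := by
    refine div_nonneg (intervalIntegral.integral_nonneg zero_le_one fun t ht => ?_) (by linarith)
    exact mul_nonneg (Real.rpow_nonneg ht.1 _) (sq_nonneg _)
  have hpointwise : ∀ t ∈ Ioc (0:ℝ) 1, t ^ p * |w t| ^ q ≤ (K / (s - 1)) ^ (q / 2) * t ^ γ := by
    intro t ⟨ht0, ht1⟩
    have habs : |w t| ^ q = (w t ^ 2) ^ (q / 2) := by
      rw [← sq_abs, ← Real.rpow_natCast, ← Real.rpow_mul (abs_nonneg _)]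
      congr 1
      ring
    calc t ^ p * |w t| ^ q
        ≤ t ^ p * (t ^ (1 - s) / (s - 1) * K) ^ (q / 2) := by
          rw [habs]
          gcongr
          exact sq_le_rpow_mul_integral_rpow_mul_sq hs hw hw' hderiv hw1 ht0 ht1
      _ = (K / (s - 1)) ^ (q / 2) * t ^ γ := by
          rw [show t ^ (1 - s) / (s - 1) * K = t ^ (1 - s) * (K / (s - 1)) by ring,
            Real.mul_rpow (Real.rpow_nonneg ht0.le _) hK, ← Real.rpow_mul ht0.le,
            ← mul_assoc, ← Real.rpow_add ht0, mul_comm]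
          congr 2
          ring
  have hγ : -1 < γ := by simp only [γ]; linarith
  calc ∫ t in 0..1, t ^ p * |w t| ^ q
      ≤ ∫ t in 0..1, (K / (s - 1)) ^ (q / 2) * t ^ γ := by
        simp only [intervalIntegral.integral_of_le zero_le_one]
        refine integral_mono_of_nonneg ?_ ?_ ?_
        · filter_upwards [ae_restrict_mem measurableSet_Ioc] with t ht
          exact mul_nonneg (Real.rpow_nonneg ht.1.le _) (Real.rpow_nonneg (abs_nonneg _) _)
        · exact ((intervalIntegral.intervalIntegrable_rpow' hγ).const_mul _).1
        · filter_upwards [ae_restrict_mem measurableSet_Ioc] with t ht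
          exact hpointwise t ht
    _ = (K / (s - 1)) ^ (q / 2) / (p + 1 - (s - 1) * q / 2) := by
        rw [intervalIntegral.integral_const_mul, integral_rpow (Or.inl hγ), Real.one_rpow,
          Real.zero_rpow (by linarith)]
        simp only [γ]
        ring

end Profile

section Polar

variable {E : Type*} [NormedAddCommGroup E] [NormedSpace ℝ E] [Nontrivial E]
  [FiniteDimensional ℝ E] [MeasurableSpace E] [BorelSpace E] (μ : Measure E) [μ.IsAddHaarMeasure]

theorem setIntegral_ball_eq_integral_rpow_mul {F : E → ℝ} {f : ℝ → ℝ} {R : ℝ} (hR : 0 ≤ R)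
    (hF : ∀ x ∈ ball (0:E) R, F x = f ‖x‖) :
    ∫ x in ball (0:E) R, F x ∂μ = Module.finrank ℝ E * μ.real (ball 0 1) *
      ∫ t in 0..R, t ^ ((Module.finrank ℝ E : ℝ) - 1) * f t := by
  have hind : (ball (0:E) R).indicator F = fun x => (Iio R).indicator f ‖x‖ := by
    ext x
    by_cases hx : x ∈ ball (0:E) R
    · have hx' : ‖x‖ ∈ Iio R := mem_ball_zero_iff.mp hx
      rw [indicator_of_mem hx, indicator_of_mem hx', hF x hx]
    · have hx' : ‖x‖ ∉ Iio R := fun h => hx (mem_ball_zero_iff.mpr h)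
      rw [indicator_of_notMem hx, indicator_of_notMem hx']
  rw [← integral_indicator measurableSet_ball, hind, integral_fun_norm_addHaar, nsmul_eq_mul,
    smul_eq_mul, mul_assoc, intervalIntegral.integral_of_le hR, integral_Ioc_eq_integral_Ioo]
  congr 2
  have hpow : ∀ t : ℝ, t ^ (Module.finrank ℝ E - 1) = t ^ ((Module.finrank ℝ E : ℝ) - 1) := by
    intro t
    rw [← Real.rpow_natCast, Nat.cast_sub Module.finrank_pos, Nat.cast_one]
  rw [← Ioi_inter_Iio, ← setIntegral_indicator measurableSet_Iio]
  refine setIntegral_congr_fun measurableSet_Ioi fun t _ => ?_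
  by_cases ht : t < R <;> simp [ht, hpow]

end Polar

section RadialProfile

variable {E : Type*} [NormedAddCommGroup E] [InnerProductSpace ℝ E]

theorem norm_fderiv_eq_of_norm_eq {F : Type*} [NormedAddCommGroup F] [NormedSpace ℝ F]
    {u : E → F} (hu : ∀ x y : E, ‖x‖ = ‖y‖ → u x = u y) {x y : E}
    (hx : DifferentiableAt ℝ u x) (hxy : ‖y‖ = ‖x‖) : ‖fderiv ℝ u y‖ = ‖fderiv ℝ u x‖ := by
  -- the reflection in `(y - x)ᗮ` is an isometry sending `y` to `x` and leaving `u` invariant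
  set R : E ≃ₗᵢ[ℝ] E := Submodule.reflection (ℝ ∙ (y - x))ᗮ
  have hRy : R y = x := Submodule.reflection_sub hxy
  have hcomp : u ∘ R = u := funext fun z => hu _ _ (R.norm_map z)
  have hR : HasFDerivAt u ((fderiv ℝ u x).comp R.toLinearIsometry.toContinuousLinearMap) y := by
    have := (hRy ▸ hx.hasFDerivAt : HasFDerivAt u (fderiv ℝ u x) (R y)).comp y
      R.toLinearIsometry.toContinuousLinearMap.hasFDerivAt
    rwa [hcomp] at this
  rw [hR.fderiv]
  exact (fderiv ℝ u x).opNorm_comp_linearIsometryEquiv R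

theorem ContinuousOn.comp_smul_of_norm_le_one {X : Type*} [TopologicalSpace X] {f : E → X}
    (hf : ContinuousOn f (closedBall 0 1)) {e : E} (he : ‖e‖ ≤ 1) :
    ContinuousOn (fun t : ℝ => f (t • e)) (Icc 0 1) := by
  refine hf.comp (continuous_id.smul continuous_const).continuousOn fun t ht => ?_
  rw [mem_closedBall_zero_iff, norm_smul, Real.norm_of_nonneg ht.1]
  exact mul_le_one₀ ht.2 (norm_nonneg e) he

theorem hasDerivAt_comp_smul_of_differentiableOn_closedBall {u : E → ℝ}
    (hu : DifferentiableOn ℝ u (closedBall 0 1)) {e : E} {t : ℝ} (ht : ‖t • e‖ < 1) :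
    HasDerivAt (fun t : ℝ => u (t • e)) (fderivWithin ℝ u (closedBall 0 1) (t • e) e) t := by
  have hnhds : closedBall (0:E) 1 ∈ 𝓝 (t • e) :=
    closedBall_mem_nhds_of_mem (mem_ball_zero_iff.mpr ht)
  rw [fderivWithin_of_mem_nhds hnhds]
  exact ((hu.differentiableAt hnhds).hasFDerivAt.comp_hasDerivAt t
    (by simpa using (hasDerivAt_id t).smul_const e))

theorem norm_gradient_eq_of_norm_eq [CompleteSpace E] {u : E → ℝ}
    (hu : ∀ x y : E, ‖x‖ = ‖y‖ → u x = u y) (hdiff : DifferentiableOn ℝ u (closedBall 0 1))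
    {e : E} (he : ‖e‖ = 1) {x : E} (hx : x ∈ ball (0:E) 1) :
    ‖gradient u x‖ = ‖fderivWithin ℝ u (closedBall 0 1) (‖x‖ • e)‖ := by
  have hxe : ‖‖x‖ • e‖ = ‖x‖ := by rw [norm_smul, he, norm_norm, mul_one]
  have hnhds : closedBall (0:E) 1 ∈ 𝓝 (‖x‖ • e) :=
    closedBall_mem_nhds_of_mem (by rw [mem_ball_zero_iff, hxe]; exact mem_ball_zero_iff.mp hx)
  rw [gradient, (InnerProductSpace.toDual ℝ E).symm.norm_map, fderivWithin_of_mem_nhds hnhds]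
  exact (norm_fderiv_eq_of_norm_eq hu (hdiff.differentiableAt hnhds) hxe.symm)

theorem ContDiffOn.continuousOn_fderivWithin_closedBall {u : E → ℝ}
    (hu : ContDiffOn ℝ 1 u (closedBall 0 1)) :
    ContinuousOn (fderivWithin ℝ u (closedBall 0 1)) (closedBall 0 1) :=
  hu.continuousOn_fderivWithin (uniqueDiffOn_convex (convex_closedBall 0 1)
    (by rw [interior_closedBall 0 one_ne_zero]; exact ⟨0, mem_ball_self one_pos⟩)) le_rfl

end RadialProfile

section Sobolev

variable {E : Type*} [NormedAddCommGroup E] [InnerProductSpace ℝ E] [CompleteSpace E]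
  [Nontrivial E] [FiniteDimensional ℝ E] [MeasurableSpace E] [BorelSpace E]
  (μ : Measure E) [μ.IsAddHaarMeasure]

/-- The radial derivative is taken within the closed ball so that it is continuous up to the
boundary sphere. -/
theorem mul_integral_rpow_mul_sq_fderivWithin_smul_le {u : E → ℝ}
    (hrad : ∀ x y : E, ‖x‖ = ‖y‖ → u x = u y) (hu : ContDiffOn ℝ 1 u (closedBall 0 1))
    {e : E} (he : ‖e‖ = 1) :
    Module.finrank ℝ E * μ.real (ball 0 1) * ∫ t in 0..1,
        t ^ ((Module.finrank ℝ E : ℝ) / 2) * fderivWithin ℝ u (closedBall 0 1) (t • e) e ^ 2 ≤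
      ∫ x in ball 0 1, ‖x‖ ^ (-(((Module.finrank ℝ E : ℝ) - 2) / 2)) * ‖gradient u x‖ ^ 2 ∂μ := by
  set d : ℝ := (Module.finrank ℝ E : ℝ)
  have hd : 0 < d := Nat.cast_pos.mpr Module.finrank_pos
  set g : ℝ → ℝ := fun t => ‖fderivWithin ℝ u (closedBall 0 1) (t • e)‖
  have hDu := hu.continuousOn_fderivWithin_closedBall.comp_smul_of_norm_le_one he.le
  have hweight : ContinuousOn (fun t : ℝ => t ^ (d / 2)) (Icc 0 1) :=
    continuousOn_id.rpow_const fun _ _ => Or.inr (by positivity)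
  rw [setIntegral_ball_eq_integral_rpow_mul μ (f := fun t => t ^ (-((d - 2) / 2)) * g t ^ 2)
    zero_le_one fun x hx => by rw [norm_gradient_eq_of_norm_eq hrad (hu.differentiableOn
      one_ne_zero) he hx]]
  refine mul_le_mul_of_nonneg_left ?_ (by positivity)
  refine (intervalIntegral.integral_mono_on zero_le_one
    ((hweight.mul ((hDu.clm_apply continuousOn_const).pow 2)).intervalIntegrable_of_Icc
      zero_le_one)
    ((hweight.mul (hDu.norm.pow 2)).intervalIntegrable_of_Icc zero_le_one) fun t ht => ?_).trans_eq
    (intervalIntegral.integral_congr fun t ht => ?_)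
  · have hderiv_le : |fderivWithin ℝ u (closedBall 0 1) (t • e) e| ≤ g t := by
      have := (fderivWithin ℝ u (closedBall 0 1) (t • e)).le_opNorm e
      rwa [he, mul_one, Real.norm_eq_abs] at this
    refine mul_le_mul_of_nonneg_left ?_ (Real.rpow_nonneg ht.1 _)
    simpa only [Pi.pow_apply, sq_abs] using pow_le_pow_left₀ (abs_nonneg _) hderiv_le 2
  · rw [uIcc_of_le zero_le_one] at ht
    rw [← mul_assoc, ← Real.rpow_add' ht.1 (by linarith),
      show d - 1 + -((d - 2) / 2) = d / 2 by ring]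
    rfl

theorem exists_setIntegral_abs_rpow_le_of_radial {q : ℝ} (hd : 2 < (Module.finrank ℝ E : ℝ))
    (hq : 0 < q) (hdq : ((Module.finrank ℝ E : ℝ) - 2) / 2 * q / 2 < Module.finrank ℝ E) :
    ∃ C > 0, ∀ u : E → ℝ, (∀ x y : E, ‖x‖ = ‖y‖ → u x = u y) →
      ContDiffOn ℝ 1 u (closedBall 0 1) → (∀ x : E, ‖x‖ = 1 → u x = 0) →
      ∫ x in ball 0 1, |u x| ^ q ∂μ ≤ C *
        (∫ x in ball 0 1, ‖x‖ ^ (-(((Module.finrank ℝ E : ℝ) - 2) / 2)) * ‖gradient u x‖ ^ 2 ∂μ)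
          ^ (q / 2) := by
  set d : ℝ := (Module.finrank ℝ E : ℝ)
  set a : ℝ := (d - 2) / 2
  set β : ℝ := d - a * q / 2
  set c : ℝ := d * μ.real (ball 0 1)
  have ha : 0 < a := by simp only [a]; linarith
  have hβ : 0 < β := by simp only [β]; linarith
  have hc : 0 < c := mul_pos (by linarith)
    (ENNReal.toReal_pos (measure_ball_pos μ 0 one_pos).ne' measure_ball_lt_top.ne)
  obtain ⟨e, he⟩ := exists_norm_eq E zero_le_one
  refine ⟨c / β * (c * a) ^ (-(q / 2)), by positivity, fun u hrad hu hbd => ?_⟩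
  set energy := ∫ x in ball 0 1, ‖x‖ ^ (-a) * ‖gradient u x‖ ^ 2 ∂μ
  set w' : ℝ → ℝ := fun t => fderivWithin ℝ u (closedBall 0 1) (t • e) e
  set K := ∫ t in 0..1, t ^ (d / 2) * w' t ^ 2
  have hK : K ≤ energy / c :=
    (le_div_iff₀' hc).mpr (mul_integral_rpow_mul_sq_fderivWithin_smul_le μ hrad hu he)
  have hK0 : 0 ≤ K := intervalIntegral.integral_nonneg zero_le_one fun t ht =>
    mul_nonneg (Real.rpow_nonneg ht.1 _) (sq_nonneg _)
  have hderiv : ∀ t ∈ Ioo (0:ℝ) 1, HasDerivAt (fun t : ℝ => u (t • e)) (w' t) t := fun t ht =>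
    hasDerivAt_comp_smul_of_differentiableOn_closedBall (hu.differentiableOn one_ne_zero)
      (by rw [norm_smul, he, mul_one, Real.norm_of_nonneg ht.1.le]; exact ht.2)
  have hs : d / 2 - 1 = a := by simp only [a]; ring
  have hprofile := integral_rpow_mul_abs_rpow_le (p := d - 1) (s := d / 2) (q := q)
    (by linarith) hq (by rw [hs]; linarith) (hu.continuousOn.comp_smul_of_norm_le_one he.le)
    ((hu.continuousOn_fderivWithin_closedBall.comp_smul_of_norm_le_one he.le).clm_apply
      continuousOn_const) hderiv (by rw [one_smul]; exact hbd e he)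
  rw [hs, show d - 1 + 1 - a * q / 2 = β by simp only [β]; ring] at hprofile
  have hL : ∫ x in ball 0 1, |u x| ^ q ∂μ = c * ∫ t in 0..1, t ^ (d - 1) * |u (t • e)| ^ q :=
    setIntegral_ball_eq_integral_rpow_mul μ zero_le_one fun x _ => by
      rw [hrad x (‖x‖ • e) (by rw [norm_smul, he, norm_norm, mul_one])]
  rw [hL]
  calc c * ∫ t in 0..1, t ^ (d - 1) * |u (t • e)| ^ q
      ≤ c * ((K / a) ^ (q / 2) / β) := by gcongr
    _ ≤ c * ((energy / c / a) ^ (q / 2) / β) := by gcongr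
    _ = c / β * (c * a) ^ (-(q / 2)) * energy ^ (q / 2) := by
      have henergy : 0 ≤ energy := setIntegral_nonneg measurableSet_ball fun _ _ => by positivity
      rw [div_div, Real.div_rpow henergy (by positivity), Real.rpow_neg (by positivity)]
      ring

end Sobolev

theorem rpow_one_div_le_of_le_mul_rpow {L E C q : ℝ} (hL : 0 ≤ L) (hE : 0 ≤ E) (hC : 0 ≤ C)
    (hq : 0 < q) (h : L ≤ C * E ^ (q / 2)) : L ^ (1 / q) ≤ C ^ (1 / q) * E ^ ((1:ℝ) / 2) :=
  calc L ^ (1 / q) ≤ (C * E ^ (q / 2)) ^ (1 / q) := Real.rpow_le_rpow hL h (by positivity)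
    _ = C ^ (1 / q) * E ^ ((1:ℝ) / 2) := by
      rw [Real.mul_rpow hC (Real.rpow_nonneg hE _), ← Real.rpow_mul hE]
      congr 2
      field_simp

/-- weighted Sobolev-type estimate with weight `|x|^{-a}`, `a = (n-2)/2`. -/
theorem statement6 (n : ℕ) (hn : 4 ≤ n) (q : ℝ) (hq1 : 2 < q)
    (hq2 : q < 4 * (n : ℝ) / ((n : ℝ) - 2)) :
    ∃ C > (0:ℝ), ∀ u : Euc n → ℝ, Radial n u →
      ContDiffOn ℝ 1 u (closure (Omeg n)) →
      (∀ x : Euc n, ‖x‖ = 1 → u x = 0) →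
      IntegrableOn (fun x => ‖x‖ ^ (-(((n : ℝ) - 2) / 2)) * ‖gradient u x‖ ^ 2) (Omeg n) →
      (∫ x in Omeg n, |u x| ^ q) ^ ((1:ℝ)/q) ≤
        C * (∫ x in Omeg n, ‖x‖ ^ (-(((n : ℝ) - 2) / 2)) * ‖gradient u x‖ ^ 2) ^ ((1:ℝ)/2) := by
  have hn' : (4:ℝ) ≤ n := by exact_mod_cast hn
  have hqn : ((n : ℝ) - 2) / 2 * q / 2 < n := by
    have := (lt_div_iff₀ (by linarith : (0:ℝ) < n - 2)).mp hq2
    nlinarith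
  have : Nonempty (Fin n) := ⟨⟨0, by omega⟩⟩
  obtain ⟨C, hC, hineq⟩ := exists_setIntegral_abs_rpow_le_of_radial (E := Euc n) volume (q := q)
    (by rw [finrank_euclideanSpace_fin]; linarith) (by linarith)
    (by rwa [finrank_euclideanSpace_fin])
  refine ⟨C ^ (1 / q), by positivity, fun u hrad hu hbd _ => ?_⟩
  simp only [Omeg, closure_ball (0 : Euc n) one_ne_zero] at hu ⊢
  refine rpow_one_div_le_of_le_mul_rpow (setIntegral_nonneg measurableSet_ball fun _ _ => by positivity)
    (setIntegral_nonneg measurableSet_ball fun _ _ => by positivity) hC.le (by linarith) ?_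
  simpa only [finrank_euclideanSpace_fin] using hineq u hrad hu hbd

end
end

section
/- Let α > 0, β = n/(α+n) and γ = (n−2)(1−β). Let u ∈ C¹(Ω̄) be radially symmetric with u = 0 on ∂Ω, with radial profile u(r), and define v: Ω̄ → ℝ by v(x) = u(|x|^β). Then for every continuous function h: ℝ → ℝ with h(0) = 0 one has ∫_Ω |x|^α h(u(x)) dx = β ∫_Ω h(v(x)) dx, and moreover ∫_Ω |∇u|² dx = β^{−1} ∫_Ω |x|^{−γ} |∇v|² dx. -/
open MeasureTheory Filter

noncomputable section

/-! In polar coordinates both identities become integrals over `(0, 1)` against `r ^ (n - 1) dr`,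
and the substitution `r = s ^ β`, `dr = β s ^ (β - 1) ds` turns one into the other. In the first
identity the powers of `s` match because `β (α + n) = n`; in the second, `|∇v|²` carries the extra
factor `(β s ^ (β - 1))²` from the chain rule, which the weight `|x| ^ (-γ)` with
`γ = (n - 2)(1 - β)` exactly balances. For a radial function `|∇u(x)| = |w'(|x|)|` away from the
null set `{0}`. -/

open Set Metric Real

section RadialCalculus

variable {E : Type*} [NormedAddCommGroup E]

theorem differentiableAt_of_differentiableAt_comp_norm [NormedSpace ℝ E] {g : ℝ → ℝ} {x : E}
    (hx : x ≠ 0) (h : DifferentiableAt ℝ (fun y => g ‖y‖) x) : DifferentiableAt ℝ g ‖x‖ := by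
  have hx' : 0 < ‖x‖ := norm_pos_iff.mpr hx
  set e : E := ‖x‖⁻¹ • x
  have he : ‖e‖ = 1 := by simp [e, norm_smul, hx'.ne']
  have hray : DifferentiableAt ℝ (fun t : ℝ => g ‖t • e‖) ‖x‖ := by
    refine DifferentiableAt.comp (g := fun y => g ‖y‖) _ ?_ (differentiableAt_id.smul_const e)
    simpa [e, smul_smul, hx'.ne'] using h
  refine hray.congr_of_eventuallyEq ?_
  filter_upwards [lt_mem_nhds hx'] with t ht
  rw [norm_smul, he, mul_one, Real.norm_of_nonneg ht.le]

/-- No differentiability is assumed: where `g` is not differentiable at `‖x‖`, neither is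
`y ↦ g ‖y‖` at `x`, and both sides are `0`. -/
theorem norm_gradient_comp_norm [InnerProductSpace ℝ E] [CompleteSpace E] (g : ℝ → ℝ) {x : E}
    (hx : x ≠ 0) : ‖gradient (fun y => g ‖y‖) x‖ = |deriv g ‖x‖| := by
  by_cases hg : DifferentiableAt ℝ g ‖x‖
  · have : Nontrivial E := nontrivial_of_ne x 0 hx
    have hnorm : DifferentiableAt ℝ (‖·‖) x :=
      (contDiffAt_norm ℝ hx (n := 1)).differentiableAt one_ne_zero
    change ‖(InnerProductSpace.toDual ℝ E).symm (fderiv ℝ (g ∘ (‖·‖)) x)‖ = _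
    rw [LinearIsometryEquiv.norm_map,
      (hg.hasDerivAt.comp_hasFDerivAt x hnorm.hasFDerivAt).fderiv, norm_smul,
      norm_fderiv_norm hnorm, mul_one, Real.norm_eq_abs]
  · rw [gradient_eq_zero_of_not_differentiableAt
      (mt (differentiableAt_of_differentiableAt_comp_norm hx) hg),
      deriv_zero_of_not_differentiableAt hg, norm_zero, abs_zero]

theorem norm_gradient_comp_norm_sq_ae_eq [InnerProductSpace ℝ E] [CompleteSpace E]
    [MeasurableSpace E] (μ : Measure E) [NullSingletonClass μ] (g : ℝ → ℝ) :
    (fun x => ‖gradient (fun y => g ‖y‖) x‖ ^ 2) =ᵐ[μ] fun x => deriv g ‖x‖ ^ 2 := by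
  filter_upwards [compl_mem_ae_iff.mpr (measure_singleton 0)] with x hx
  rw [norm_gradient_comp_norm g hx, sq_abs]

end RadialCalculus

/-- As for `norm_gradient_comp_norm`, both sides vanish together when `g` is not differentiable
at `t ^ p`, since `s ↦ s ^ p` is a local diffeomorphism at `t`. -/
theorem deriv_comp_rpow (g : ℝ → ℝ) {p t : ℝ} (hp : p ≠ 0) (ht : 0 < t) :
    deriv (fun s => g (s ^ p)) t = deriv g (t ^ p) * (p * t ^ (p - 1)) := by
  by_cases hg : DifferentiableAt ℝ g (t ^ p)
  · exact (hg.hasDerivAt.comp t (hasDerivAt_rpow_const (Or.inl ht.ne'))).deriv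
  rw [deriv_zero_of_not_differentiableAt hg, zero_mul]
  refine deriv_zero_of_not_differentiableAt fun hG => hg ?_
  have htp : 0 < t ^ p := rpow_pos_of_pos ht p
  have hinv : (t ^ p) ^ p⁻¹ = t := by rw [← rpow_mul ht.le, mul_inv_cancel₀ hp, rpow_one]
  have hcomp : DifferentiableAt ℝ (fun y => g ((y ^ p⁻¹) ^ p)) (t ^ p) := by
    refine DifferentiableAt.comp (g := fun s => g (s ^ p)) _ (by rwa [hinv]) ?_
    exact (hasDerivAt_rpow_const (Or.inl htp.ne')).differentiableAt
  refine hcomp.congr_of_eventuallyEq ?_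
  filter_upwards [lt_mem_nhds htp] with y hy
  rw [← rpow_mul hy.le, inv_mul_cancel₀ hp, rpow_one]

theorem integral_Ioo_comp_rpow {F : Type*} [NormedAddCommGroup F] [NormedSpace ℝ F]
    (g : ℝ → F) {p : ℝ} (hp : 0 < p) :
    ∫ s in Ioo 0 1, (p * s ^ (p - 1)) • g (s ^ p) = ∫ r in Ioo 0 1, g r := by
  have himage : (· ^ p) '' Ioo (0 : ℝ) 1 = Ioo 0 1 := by
    ext r
    constructor
    · rintro ⟨s, hs, rfl⟩
      exact ⟨rpow_pos_of_pos hs.1 p, rpow_lt_one hs.1.le hs.2 hp⟩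
    · rintro ⟨hr0, hr1⟩
      refine ⟨r ^ p⁻¹, ⟨rpow_pos_of_pos hr0 _, rpow_lt_one hr0.le hr1 (inv_pos.mpr hp)⟩, ?_⟩
      show (r ^ p⁻¹) ^ p = r
      rw [← rpow_mul hr0.le, inv_mul_cancel₀ hp.ne', rpow_one]
  have hsubst := integral_image_eq_integral_abs_deriv_smul
    (measurableSet_Ioo (a := (0 : ℝ)) (b := 1))
    (fun s hs => (hasDerivAt_rpow_const (Or.inl hs.1.ne')).hasDerivWithinAt)
    ((strictMonoOn_rpow_Ici_of_exponent_pos hp).injOn.mono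
      (Ioo_subset_Ioi_self.trans Ioi_subset_Ici_self)) g
  rw [himage] at hsubst
  rw [hsubst]
  refine setIntegral_congr_fun measurableSet_Ioo fun s hs => ?_
  rw [abs_of_pos (by have := rpow_pos_of_pos hs.1 (p - 1); positivity)]

theorem integral_ball_fun_norm_addHaar {E F : Type*} [NormedAddCommGroup E] [NormedSpace ℝ E]
    [Nontrivial E] [FiniteDimensional ℝ E] [MeasurableSpace E] [BorelSpace E] (μ : Measure E)
    [μ.IsAddHaarMeasure] [NormedAddCommGroup F] [NormedSpace ℝ F] (f : ℝ → F) (R : ℝ) :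
    ∫ x in ball (0 : E) R, f ‖x‖ ∂μ = Module.finrank ℝ E • μ.real (ball 0 1) •
      ∫ r in Ioo 0 R, r ^ (Module.finrank ℝ E - 1) • f r := by
  have hball : ∀ x : E,
      (ball (0 : E) R).indicator (fun y => f ‖y‖) x = (Iio R).indicator f ‖x‖ := by
    intro x
    simp [indicator]
  rw [← integral_indicator measurableSet_ball, funext hball, integral_fun_norm_addHaar,
    ← Ioi_inter_Iio, ← setIntegral_indicator measurableSet_Iio]
  congr 2
  refine setIntegral_congr_fun measurableSet_Ioi fun r _ => ?_
  simp [indicator_apply]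

theorem integral_Omeg_fun_norm {n : ℕ} (hn : 0 < n) (f : ℝ → ℝ) :
    ∫ x in Omeg n, f ‖x‖ =
      n * volume.real (ball (0 : Euc n) 1) * ∫ r in Ioo 0 1, r ^ ((n : ℝ) - 1) * f r := by
  have : NeZero n := ⟨hn.ne'⟩
  rw [Omeg, integral_ball_fun_norm_addHaar, finrank_euclideanSpace_fin, nsmul_eq_mul, smul_eq_mul,
    mul_assoc]
  congr 2
  refine setIntegral_congr_fun measurableSet_Ioo fun r _ => ?_
  rw [smul_eq_mul, ← rpow_natCast, Nat.cast_sub hn, Nat.cast_one]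

theorem integral_Omeg_rpow_mul_fun_norm {n : ℕ} (hn : 0 < n) {α β : ℝ} (hβ : 0 < β)
    (hβα : β * (α + n) = n) (H : ℝ → ℝ) :
    ∫ x in Omeg n, ‖x‖ ^ α * H ‖x‖ = β * ∫ x in Omeg n, H (‖x‖ ^ β) := by
  rw [integral_Omeg_fun_norm hn (fun r => r ^ α * H r),
    integral_Omeg_fun_norm hn (fun r => H (r ^ β)), ← integral_Ioo_comp_rpow _ hβ,
    mul_left_comm β]
  congr 1
  rw [← integral_const_mul]
  refine setIntegral_congr_fun measurableSet_Ioo fun s ⟨hs, _⟩ => ?_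
  have hexp : s ^ (β - 1) * s ^ (β * ((n : ℝ) - 1)) * s ^ (β * α) = s ^ ((n : ℝ) - 1) := by
    rw [← rpow_add hs, ← rpow_add hs]
    congr 1
    linear_combination hβα
  rw [smul_eq_mul, ← rpow_mul hs.le, ← rpow_mul hs.le]
  linear_combination (β * H (s ^ β)) * hexp

theorem integral_Omeg_deriv_sq_eq_comp_rpow {n : ℕ} (hn : 0 < n) {β γ : ℝ} (hβ : 0 < β)
    (hγ : γ = ((n : ℝ) - 2) * (1 - β)) (w : ℝ → ℝ) :
    ∫ x in Omeg n, deriv w ‖x‖ ^ 2 =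
      β⁻¹ * ∫ x in Omeg n, ‖x‖ ^ (-γ) * deriv (fun r => w (r ^ β)) ‖x‖ ^ 2 := by
  rw [integral_Omeg_fun_norm hn (fun r => deriv w r ^ 2),
    integral_Omeg_fun_norm hn (fun r => r ^ (-γ) * deriv (fun r => w (r ^ β)) r ^ 2),
    ← integral_Ioo_comp_rpow _ hβ, mul_left_comm β⁻¹]
  congr 1
  rw [← integral_const_mul]
  refine setIntegral_congr_fun measurableSet_Ioo fun s ⟨hs, _⟩ => ?_
  have hexp : s ^ ((n : ℝ) - 1) * s ^ (-γ) * s ^ (β - 1) = s ^ (β * ((n : ℝ) - 1)) := by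
    rw [← rpow_add hs, ← rpow_add hs]
    congr 1
    linear_combination -hγ
  have hββ : β⁻¹ * β ^ 2 = β := by field_simp
  rw [smul_eq_mul, deriv_comp_rpow w hβ.ne' hs, ← rpow_mul hs.le]
  linear_combination (-(β * s ^ (β - 1) * deriv w (s ^ β) ^ 2)) * hexp
    - (s ^ ((n : ℝ) - 1) * s ^ (-γ) * (s ^ (β - 1)) ^ 2 * deriv w (s ^ β) ^ 2) * hββ

theorem statement12_general (n : ℕ) (hn : 4 ≤ n) (α : ℝ) (hα : 0 < α)
    (β γ : ℝ) (hβ : β = (n : ℝ) / (α + n)) (hγ : γ = ((n : ℝ) - 2) * (1 - β))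
    (u : Euc n → ℝ) (w : ℝ → ℝ) (hw : ∀ x : Euc n, u x = w ‖x‖)
    (v : Euc n → ℝ) (hv : ∀ x : Euc n, v x = w (‖x‖ ^ β)) :
    (∀ h : ℝ → ℝ, Continuous h → h 0 = 0 →
      (∫ x in Omeg n, ‖x‖ ^ α * h (u x)) = β * ∫ x in Omeg n, h (v x)) ∧
    (∫ x in Omeg n, ‖gradient u x‖ ^ 2) =
      β⁻¹ * ∫ x in Omeg n, ‖x‖ ^ (-γ) * ‖gradient v x‖ ^ 2 := by
  have hn0 : 0 < n := by omega
  have : NeZero n := ⟨hn0.ne'⟩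
  have hβ0 : 0 < β := by rw [hβ]; positivity
  have hβα : β * (α + n) = n := by rw [hβ]; field_simp
  obtain rfl : u = fun x => w ‖x‖ := funext hw
  obtain rfl : v = fun x => w (‖x‖ ^ β) := funext hv
  refine ⟨fun h _ _ => integral_Omeg_rpow_mul_fun_norm hn0 hβ0 hβα (h ∘ w), ?_⟩
  calc ∫ x in Omeg n, ‖gradient (fun y => w ‖y‖) x‖ ^ 2
      = ∫ x in Omeg n, deriv w ‖x‖ ^ 2 :=
        integral_congr_ae (norm_gradient_comp_norm_sq_ae_eq _ w)
    _ = β⁻¹ * ∫ x in Omeg n, ‖x‖ ^ (-γ) * deriv (fun r => w (r ^ β)) ‖x‖ ^ 2 :=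
      integral_Omeg_deriv_sq_eq_comp_rpow hn0 hβ0 hγ w
    _ = β⁻¹ * ∫ x in Omeg n, ‖x‖ ^ (-γ) * ‖gradient (fun y => w (‖y‖ ^ β)) x‖ ^ 2 := by
      refine congrArg _ (integral_congr_ae ?_)
      filter_upwards [norm_gradient_comp_norm_sq_ae_eq _ (fun r => w (r ^ β))] with x hx
      exact congrArg _ hx.symm

/-- change of variables `v(x) = u(|x|^β)`, `β = n/(α+n)`,
transforming the weighted integrals. -/
theorem statement12 (n : ℕ) (hn : 4 ≤ n) (α : ℝ) (hα : 0 < α)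
    (β γ : ℝ) (hβ : β = (n : ℝ) / (α + n)) (hγ : γ = ((n : ℝ) - 2) * (1 - β))
    (u : Euc n → ℝ) (w : ℝ → ℝ) (hw : ∀ x : Euc n, u x = w ‖x‖)
    (hC1 : ContDiffOn ℝ 1 u (closure (Omeg n)))
    (hbd : ∀ x : Euc n, ‖x‖ = 1 → u x = 0)
    (v : Euc n → ℝ) (hv : ∀ x : Euc n, v x = w (‖x‖ ^ β)) :
    (∀ h : ℝ → ℝ, Continuous h → h 0 = 0 →
      (∫ x in Omeg n, ‖x‖ ^ α * h (u x)) = β * ∫ x in Omeg n, h (v x)) ∧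
    (∫ x in Omeg n, ‖gradient u x‖ ^ 2) =
      β⁻¹ * ∫ x in Omeg n, ‖x‖ ^ (-γ) * ‖gradient v x‖ ^ 2 :=
  statement12_general n hn α hα β γ hβ hγ u w hw v hv

end
end
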